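/- If f, g: ℕ → E(q) are q-holonomic sequences, then their pointwise product n ↦ f(n)·g(n) is q-holonomic. -/

import Mathlib

open scoped BigOperators

/-- A sequence `f : ℕ → E(q)` is `q`-holonomic if it satisfies a nontrivial linear
recursion `∑_{j=0}^d a_j(q, qⁿ) f(n+j) = 0` with coefficients `a_j ∈ E[u,v]`, not all zero. -/
def IsQHolonomic {E : Type} [Field E] (f : ℕ → RatFunc E) : Prop :=
  ∃ (d : ℕ) (a : ℕ → MvPolynomial (Fin 2) E),
    (∃ j ≤ d, a j ≠ 0) ∧
    ∀ n : ℕ, ∑ j ∈ Finset.range (d + 1),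
      (MvPolynomial.aeval ![RatFunc.X, (RatFunc.X : RatFunc E) ^ n] (a j)) * f (n + j) = 0

/-!
Work with germs at infinity of sequences `ℕ → E(q)`. A nonzero `b ∈ E[q, M]` gives a sequence
`b(q, qⁿ)` that is eventually nonzero (it is the evaluation at `qⁿ` of a nonzero polynomial over
`E(q)`, which has finitely many roots), so the germs form an algebra over the field `E(q, M)`.
If `f` satisfies a recurrence with nonzero leading coefficient, every shift of `f` is an
`E(q, M)`-combination of the first few, so the shifts of `f` span a finite-dimensional space.
The shifts of `fg` then lie in the product of the spaces for `f` and `g`, hence satisfy a linear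
relation; clearing denominators gives a recurrence for all large `n`, and multiplying it by
`∏_{k < N} (M - qᵏ)` makes it hold for all `n`.
-/

open Filter Finset Set Submodule
open scoped Pointwise

theorem RatFunc.X_pow_injective {E : Type} [Field E] :
    Function.Injective ((RatFunc.X : RatFunc E) ^ · : ℕ → RatFunc E) := by
  intro a b h
  simp only [← RatFunc.algebraMap_X, ← map_pow, (RatFunc.algebraMap_injective E).eq_iff] at h
  simpa using congrArg Polynomial.natDegree h

theorem Polynomial.eventually_eval_pow_ne_zero {K : Type*} [CommRing K] [IsDomain K]
    {p : Polynomial K} (hp : p ≠ 0) {x : K} (hx : Function.Injective (x ^ · : ℕ → K)) :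
    ∀ᶠ n in atTop, p.eval (x ^ n) ≠ 0 :=
  Nat.cofinite_eq_atTop ▸
    ((Polynomial.finite_setOfPred_isRoot hp).preimage hx.injOn).eventually_cofinite_notMem

theorem Filter.Germ.isUnit_coe_of_eventually_ne_zero {α K : Type*} [GroupWithZero K]
    {l : Filter α} {u : α → K} (h : ∀ᶠ x in l, u x ≠ 0) : IsUnit (u : l.Germ K) :=
  isUnit_iff_exists.2 ⟨(u⁻¹ : α → K), Germ.coe_eq.2 <| h.mono fun _ hx => mul_inv_cancel₀ hx,
    Germ.coe_eq.2 <| h.mono fun _ hx => inv_mul_cancel₀ hx⟩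

theorem Submodule.mem_of_sum_range_succ_smul_eq_zero {K V : Type*} [Field K] [AddCommGroup V]
    [Module K V] (p : Submodule K V) {c : ℕ → K} {v : ℕ → V} {d : ℕ} (hc : c d ≠ 0)
    (h : ∑ j ∈ range (d + 1), c j • v j = 0) (hv : ∀ j < d, v j ∈ p) : v d ∈ p := by
  rw [sum_range_succ, add_eq_zero_iff_neg_eq] at h
  rw [← inv_smul_smul₀ hc (v d), ← h]
  exact p.smul_mem _ <| p.neg_mem <| p.sum_mem fun j hj => p.smul_mem _ (hv j (mem_range.1 hj))

namespace IsQHolonomic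

variable {E : Type} [Field E]

theorem eventually_aeval_ne_zero {b : MvPolynomial (Fin 2) E} (hb : b ≠ 0) :
    ∀ᶠ n in atTop, MvPolynomial.aeval ![RatFunc.X, (RatFunc.X : RatFunc E) ^ n] b ≠ 0 := by
  set P := ((Polynomial.Bivariate.equivMvPolynomial E).symm b).map
    (algebraMap (Polynomial E) (RatFunc E))
  have hP : P ≠ 0 := by
    rw [Ne, Polynomial.map_eq_zero_iff (IsFractionRing.injective _ _)]
    simpa using hb
  have heval (y : RatFunc E) : MvPolynomial.aeval ![RatFunc.X, y] b = P.eval y := by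
    rw [Polynomial.eval_map]
    refine RingHom.congr_fun (f := (MvPolynomial.aeval ![RatFunc.X, y]).toRingHom)
      (g := (Polynomial.eval₂RingHom (algebraMap (Polynomial E) (RatFunc E)) y).comp
        (Polynomial.Bivariate.equivMvPolynomial E).symm.toRingEquiv.toRingHom) ?_ b
    refine MvPolynomial.ringHom_ext (fun r => ?_) (fun i => ?_)
    · simp
    · fin_cases i <;> simp
  simpa only [heval] using Polynomial.eventually_eval_pow_ne_zero hP RatFunc.X_pow_injective

noncomputable def shiftCoeff (m : ℕ) : MvPolynomial (Fin 2) E →ₐ[E] MvPolynomial (Fin 2) E :=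
  MvPolynomial.aeval ![MvPolynomial.X 0, MvPolynomial.X 0 ^ m * MvPolynomial.X 1]

theorem aeval_shiftCoeff (m n : ℕ) (b : MvPolynomial (Fin 2) E) :
    MvPolynomial.aeval ![RatFunc.X, (RatFunc.X : RatFunc E) ^ n] (shiftCoeff m b) =
      MvPolynomial.aeval ![RatFunc.X, (RatFunc.X : RatFunc E) ^ (n + m)] b := by
  rw [shiftCoeff, ← AlgHom.comp_apply, MvPolynomial.comp_aeval]
  congr 2
  ext i
  fin_cases i <;> simp [pow_add, mul_comm]

theorem shiftCoeff_ne_zero (m : ℕ) {b : MvPolynomial (Fin 2) E} (hb : b ≠ 0) :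
    shiftCoeff m b ≠ 0 := by
  obtain ⟨n, hn⟩ := ((tendsto_add_atTop_nat m).eventually (eventually_aeval_ne_zero hb)).exists
  intro h
  exact hn (by simpa [h] using (aeval_shiftCoeff m n b).symm)

/-- The field `E(q, M)`; `X 0` stands for `q` and `X 1` for `M = qⁿ`. -/
abbrev CoeffField (E : Type) [Field E] := FractionRing (MvPolynomial (Fin 2) E)

noncomputable def evalGerm (E : Type) [Field E] :
    MvPolynomial (Fin 2) E →+* (atTop : Filter ℕ).Germ (RatFunc E) :=
  (Germ.coeRingHom atTop).comp <| RingHom.pi fun n =>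
    (MvPolynomial.aeval ![RatFunc.X, (RatFunc.X : RatFunc E) ^ n]).toRingHom

theorem isUnit_evalGerm {b : MvPolynomial (Fin 2) E} (hb : b ∈ nonZeroDivisors _) :
    IsUnit (evalGerm E b) :=
  Germ.isUnit_coe_of_eventually_ne_zero (eventually_aeval_ne_zero (nonZeroDivisors.ne_zero hb))

noncomputable instance : Algebra (CoeffField E) ((atTop : Filter ℕ).Germ (RatFunc E)) :=
  (IsLocalization.lift (M := nonZeroDivisors _) fun b => isUnit_evalGerm b.2).toAlgebra

def shiftGerm {K : Type*} (f : ℕ → K) (k : ℕ) : (atTop : Filter ℕ).Germ K :=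
  ↑(fun n => f (n + k))

theorem algebraMap_smul_shiftGerm (b : MvPolynomial (Fin 2) E) (f : ℕ → RatFunc E) (k : ℕ) :
    algebraMap _ (CoeffField E) b • shiftGerm f k =
      ↑(fun n => MvPolynomial.aeval ![RatFunc.X, (RatFunc.X : RatFunc E) ^ n] b * f (n + k)) := by
  rw [Algebra.smul_def, RingHom.algebraMap_toAlgebra, IsLocalization.lift_eq]
  rfl

theorem sum_algebraMap_smul_shiftGerm_eq_zero_iff (s : Finset ℕ) (b : ℕ → MvPolynomial (Fin 2) E)
    (f : ℕ → RatFunc E) (k : ℕ → ℕ) :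
    ∑ i ∈ s, algebraMap _ (CoeffField E) (b i) • shiftGerm f (k i) = 0 ↔
      ∀ᶠ n in atTop, ∑ i ∈ s,
        MvPolynomial.aeval ![RatFunc.X, (RatFunc.X : RatFunc E) ^ n] (b i) * f (n + k i) = 0 := by
  simp only [algebraMap_smul_shiftGerm, ← Germ.coe_coeRingHom, ← map_sum]
  rw [Germ.coe_coeRingHom, ← Germ.coe_zero, Germ.coe_eq]
  simp [EventuallyEq]

theorem exists_leading_ne_zero {f : ℕ → RatFunc E} (hf : IsQHolonomic f) :
    ∃ (d : ℕ) (a : ℕ → MvPolynomial (Fin 2) E), a d ≠ 0 ∧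
      ∀ n : ℕ, ∑ j ∈ Finset.range (d + 1),
        (MvPolynomial.aeval ![RatFunc.X, (RatFunc.X : RatFunc E) ^ n] (a j)) * f (n + j) = 0 := by
  obtain ⟨d, a, ⟨j, hjd, hj⟩, h⟩ := hf
  induction d with
  | zero => exact ⟨0, a, Nat.le_zero.1 hjd ▸ hj, h⟩
  | succ d ih =>
    by_cases had : a (d + 1) = 0
    · refine ih (fun n => ?_) (Nat.lt_succ_iff.1 (hjd.lt_of_ne ?_))
      · simpa [Finset.sum_range_succ _ (d + 1), had] using h n
      · rintro rfl
        exact hj had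
    · exact ⟨d + 1, a, had, h⟩

theorem exists_finite_range_shiftGerm_subset_span {f : ℕ → RatFunc E} (hf : IsQHolonomic f) :
    ∃ w : Set ((atTop : Filter ℕ).Germ (RatFunc E)), w.Finite ∧
      range (shiftGerm f) ⊆ span (CoeffField E) w := by
  obtain ⟨d, a, had, h⟩ := hf.exists_leading_ne_zero
  refine ⟨shiftGerm f '' Set.Iio d, (Set.finite_Iio d).image _, range_subset_iff.2 fun k => ?_⟩
  induction k using Nat.strong_induction_on with | _ k ih =>
  obtain hk | ⟨m, rfl⟩ : k < d ∨ ∃ m, k = m + d :=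
    (lt_or_ge k d).imp_right fun hk => ⟨k - d, (Nat.sub_add_cancel hk).symm⟩
  · exact subset_span ⟨k, hk, rfl⟩
  · have hrel : ∑ j ∈ range (d + 1), algebraMap _ (CoeffField E) (shiftCoeff m (a j)) •
        shiftGerm f (m + j) = 0 :=
      (sum_algebraMap_smul_shiftGerm_eq_zero_iff _ _ _ _).2 <| .of_forall fun n => by
        simpa only [aeval_shiftCoeff, add_assoc] using h (n + m)
    refine mem_of_sum_range_succ_smul_eq_zero _ (v := fun j => shiftGerm f (m + j)) ?_ hrel
      fun j hj => ih _ (by omega)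
    exact (map_ne_zero_iff _ (IsFractionRing.injective _ _)).2 (shiftCoeff_ne_zero m had)

theorem of_eventually {f : ℕ → RatFunc E} (s : Finset ℕ) (b : ℕ → MvPolynomial (Fin 2) E)
    (hb : ∃ i ∈ s, b i ≠ 0)
    (h : ∀ᶠ n in atTop, ∑ i ∈ s,
      MvPolynomial.aeval ![RatFunc.X, (RatFunc.X : RatFunc E) ^ n] (b i) * f (n + i) = 0) :
    IsQHolonomic f := by
  obtain ⟨N, hN⟩ := eventually_atTop.1 h
  -- `∏_{k < N} (M - qᵏ)` kills the first `N` equations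
  set μ : MvPolynomial (Fin 2) E := ∏ k ∈ range N, (MvPolynomial.X 1 - MvPolynomial.X 0 ^ k)
  have hμ : μ ≠ 0 := prod_ne_zero_iff.2 fun k _ h0 => by
    simpa using congrArg (MvPolynomial.eval ![1, 0]) h0
  have hμN n (hn : n < N) :
      MvPolynomial.aeval ![RatFunc.X, (RatFunc.X : RatFunc E) ^ n] μ = 0 := by
    simp only [μ, map_prod, map_sub, map_pow, MvPolynomial.aeval_X]
    exact prod_eq_zero (mem_range.2 hn) (sub_self _)
  obtain ⟨i, hi, hbi⟩ := hb
  have hs : s ⊆ range (s.sup id + 1) := fun j hj =>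
    mem_range.2 (Nat.lt_succ_of_le (le_sup (f := id) hj))
  refine ⟨s.sup id, fun j => if j ∈ s then μ * b j else 0,
    ⟨i, le_sup (f := id) hi, by simpa [hi] using mul_ne_zero hμ hbi⟩, fun n => ?_⟩
  rw [← sum_subset hs fun j _ hj => by simp [hj]]
  calc _ = MvPolynomial.aeval ![RatFunc.X, (RatFunc.X : RatFunc E) ^ n] μ * ∑ i ∈ s,
        MvPolynomial.aeval ![RatFunc.X, (RatFunc.X : RatFunc E) ^ n] (b i) * f (n + i) := by
        rw [mul_sum]
        refine sum_congr rfl fun j hj => ?_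
        simp [hj, mul_assoc]
    _ = 0 := by
      obtain hn | hn := lt_or_ge n N
      · rw [hμN n hn, zero_mul]
      · rw [hN n hn, mul_zero]

theorem of_sum_smul_shiftGerm_eq_zero {f : ℕ → RatFunc E} (s : Finset ℕ) (c : ℕ → CoeffField E)
    (hc : ∃ i ∈ s, c i ≠ 0) (h : ∑ i ∈ s, c i • shiftGerm f i = 0) : IsQHolonomic f := by
  obtain ⟨r, hr⟩ :=
    IsLocalization.exist_integer_multiples (nonZeroDivisors (MvPolynomial (Fin 2) E)) s c
  choose! b hb using hr
  have hr0 : algebraMap _ (CoeffField E) (r : MvPolynomial (Fin 2) E) ≠ 0 :=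
    IsFractionRing.to_map_ne_zero_of_mem_nonZeroDivisors r.2
  refine of_eventually s b ?_ ((sum_algebraMap_smul_shiftGerm_eq_zero_iff s b f id).1 ?_)
  · obtain ⟨i, hi, hci⟩ := hc
    refine ⟨i, hi, fun h0 => ?_⟩
    have := hb i hi
    rw [h0, map_zero, Algebra.smul_def, eq_comm, mul_eq_zero] at this
    exact this.elim hr0 hci
  · calc _ = algebraMap _ (CoeffField E) (r : MvPolynomial (Fin 2) E) •
          ∑ i ∈ s, c i • shiftGerm f i := by
          rw [smul_sum]
          refine sum_congr rfl fun i hi => ?_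
          rw [hb i hi, Algebra.smul_def (r : MvPolynomial (Fin 2) E), mul_smul, id]
      _ = 0 := by rw [h, smul_zero]

theorem of_range_shiftGerm_subset_span {f : ℕ → RatFunc E}
    {w : Set ((atTop : Filter ℕ).Germ (RatFunc E))} (hw : w.Finite)
    (h : range (shiftGerm f) ⊆ span (CoeffField E) w) : IsQHolonomic f := by
  have : ¬ LinearIndependent (CoeffField E) (shiftGerm f) := fun hli =>
    have := hw.to_subtype
    (hli.finite_of_le_span_finite _ w h).false
  obtain ⟨s, c, hrel, i, hi, hci⟩ := not_linearIndependent_iff.1 this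
  exact of_sum_smul_shiftGerm_eq_zero s c ⟨i, hi, hci⟩ hrel

end IsQHolonomic

/-- The pointwise product of two `q`-holonomic sequences is `q`-holonomic. -/
theorem IsQHolonomic.mul {E : Type} [Field E] {f g : ℕ → RatFunc E}
    (hf : IsQHolonomic f) (hg : IsQHolonomic g) :
    IsQHolonomic (fun n => f n * g n) := by
  obtain ⟨wf, hwf, hf⟩ := hf.exists_finite_range_shiftGerm_subset_span
  obtain ⟨wg, hwg, hg⟩ := hg.exists_finite_range_shiftGerm_subset_span
  refine of_range_shiftGerm_subset_span (hwf.mul hwg) (range_subset_iff.2 fun k => ?_)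
  rw [← span_mul_span]
  exact mul_mem_mul (hf ⟨k, rfl⟩) (hg ⟨k, rfl⟩)
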